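/- arXiv:2507.09544 — 8 statements merged into one kernel-verified Lean document; each statement's English description precedes it below -/
import Mathlib

section
/- Let H = (N, M_H; E_H) be a bipartite forest in which every vertex in M_H has degree at least two. Then H contains a matching that covers all vertices of M_H. -/
/-!
By Hall's theorem it suffices that every nonempty `S ⊆ M_H` has more than `|S|` neighbours.
The edges of `H` at `S` all run between `S` and its neighbourhood `T`, so they form a forest on
`S ∪ T` with at least `2|S|` edges; a forest has fewer edges than vertices, so
`2|S| < |S| + |T|`.
-/

open Finset

namespace SimpleGraph

variable {V : Type*} {G : SimpleGraph V}

theorem IsAcyclic.card_edgeFinset_lt_card [Fintype V] [Nonempty V] [Fintype G.edgeSet]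
    (hG : G.IsAcyclic) : #G.edgeFinset < Fintype.card V := by
  classical
  obtain ⟨F, hGF, -, hF⟩ := connected_top.exists_isTree_le_of_le_of_isAcyclic le_top hG
  calc #G.edgeFinset ≤ #F.edgeFinset := card_le_card (edgeFinset_mono hGF)
    _ < Fintype.card V := by rw [← hF.card_edgeFinset]; exact Nat.lt_succ_self _

theorem IsAcyclic.card_edgeFinset_lt_card_of_support_subset [Fintype V] [DecidableRel G.Adj]
    (hG : G.IsAcyclic) {s : Finset V} (hs : s.Nonempty) (hsupp : G.support ⊆ s) :
    #G.edgeFinset < #s := by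
  classical
  have : Nonempty (s : Set V) := hs.coe_sort
  convert (hG.induce s).card_edgeFinset_lt_card using 1
  · convert (card_edgeFinset_induce_of_support_subset hsupp).symm
  · simp

theorem IsBipartiteWith.isIndepSet {s t : Set V} (h : G.IsBipartiteWith s t) : G.IsIndepSet s :=
  fun _ hv _ hw _ hadj => h.disjoint.notMem_of_mem_left hv (h.mem_of_mem_adj hw hadj.symm)

theorem IsAcyclic.card_lt_card_biUnion_neighborFinset [Fintype V] [DecidableEq V]
    [DecidableRel G.Adj] (hG : G.IsAcyclic) {s : Finset V} (hs : G.IsIndepSet s)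
    (hs₀ : s.Nonempty) (hdeg : ∀ v ∈ s, 2 ≤ G.degree v) :
    #s < #(s.biUnion (G.neighborFinset ·)) := by
  set T := s.biUnion (G.neighborFinset ·)
  have hdisj : Disjoint s T := by
    refine Finset.disjoint_left.mpr fun w hws hwT => ?_
    obtain ⟨v, hvs, hvw⟩ := mem_biUnion.mp hwT
    rw [mem_neighborFinset] at hvw
    exact hs hvs hws hvw.ne hvw
  set H := G.between s T
  have hH : H.IsBipartiteWith s T := between_isBipartiteWith (disjoint_coe.mpr hdisj)
  have hdegH : ∀ v ∈ s, H.degree v = G.degree v := fun v hv => by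
    simp_rw [← card_neighborFinset_eq_degree]
    congr 1
    ext w
    simp only [mem_neighborFinset, H, between_adj]
    exact ⟨fun h => h.1, fun h => ⟨h, .inl ⟨hv, mem_biUnion.mpr ⟨v, hv, by simpa using h⟩⟩⟩⟩
  have hedges : ∑ v ∈ s, G.degree v = #H.edgeFinset := by
    rw [← isBipartiteWith_sum_degrees_eq_card_edges hH]
    exact sum_congr rfl fun v hv => (hdegH v hv).symm
  have hforest : #H.edgeFinset < #(s ∪ T) := by
    refine (hG.anti between_le).card_edgeFinset_lt_card_of_support_subset
      (hs₀.mono subset_union_left) ?_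
    simpa using isBipartiteWith_support_subset hH
  have hsum : #s • 2 ≤ ∑ v ∈ s, G.degree v := card_nsmul_le_sum s _ 2 hdeg
  rw [card_union_of_disjoint hdisj] at hforest
  rw [smul_eq_mul] at hsum
  omega

theorem IsAcyclic.ncard_le_ncard_iUnion_neighborSet [Fintype V] [DecidableRel G.Adj]
    (hG : G.IsAcyclic) {s : Set V} (hs : G.IsIndepSet s) (hdeg : ∀ v ∈ s, 2 ≤ G.degree v) :
    s.ncard ≤ (⋃ v ∈ s, G.neighborSet v).ncard := by
  classical
  obtain ⟨t, rfl⟩ := s.toFinite.exists_finset_coe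
  rcases t.eq_empty_or_nonempty with rfl | ht
  · simp
  have hN : ⋃ v ∈ (t : Set V), G.neighborSet v = t.biUnion (G.neighborFinset ·) := by
    ext; simp
  rw [hN, Set.ncard_coe_finset, Set.ncard_coe_finset]
  exact (hG.card_lt_card_biUnion_neighborFinset hs ht hdeg).le

end SimpleGraph

open SimpleGraph

theorem bipartite_forest_matching_covers_chores_general {N M : Type*} [Fintype N] [Fintype M]
    (G : SimpleGraph (N ⊕ M)) [DecidableRel G.Adj]
    (hbip : ∀ u v, G.Adj u v → ∃ i j,
      (u = Sum.inl i ∧ v = Sum.inr j) ∨ (u = Sum.inr j ∧ v = Sum.inl i))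
    (hforest : G.IsAcyclic)
    (hdeg : ∀ j : M, 2 ≤ G.degree (Sum.inr j)) :
    ∃ M' : G.Subgraph, M'.IsMatching ∧ ∀ j : M, Sum.inr j ∈ M'.verts := by
  have hG : G.IsBipartiteWith (Set.range Sum.inr) (Set.range Sum.inl) := by
    refine ⟨Set.isCompl_range_inl_range_inr.disjoint.symm, fun u v huv => ?_⟩
    obtain ⟨i, j, ⟨rfl, rfl⟩ | ⟨rfl, rfl⟩⟩ := hbip u v huv
    · exact .inr ⟨⟨i, rfl⟩, ⟨j, rfl⟩⟩
    · exact .inl ⟨⟨j, rfl⟩, ⟨i, rfl⟩⟩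
  obtain ⟨M', hcover, hM'⟩ := exists_isMatching_of_forall_ncard_le hG fun s hs =>
    hforest.ncard_le_ncard_iUnion_neighborSet (hG.isIndepSet.mono hs) fun v hv => by
      obtain ⟨j, rfl⟩ := hs hv
      exact hdeg j
  exact ⟨M', hM', fun j => hcover ⟨j, rfl⟩⟩

/-- A bipartite forest `H = (N, M_H; E_H)` in which every vertex of `M_H`
has degree at least two contains a matching covering all vertices of `M_H`. -/
theorem bipartite_forest_matching_covers_chores {N M : Type*} [Fintype N] [Fintype M]
    [DecidableEq N] [DecidableEq M]
    (G : SimpleGraph (N ⊕ M)) [DecidableRel G.Adj]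
    (hbip : ∀ u v, G.Adj u v → ∃ i j,
      (u = Sum.inl i ∧ v = Sum.inr j) ∨ (u = Sum.inr j ∧ v = Sum.inl i))
    (hforest : G.IsAcyclic)
    (hdeg : ∀ j : M, 2 ≤ G.degree (Sum.inr j)) :
    ∃ M' : G.Subgraph, M'.IsMatching ∧ ∀ j : M, Sum.inr j ∈ M'.verts :=
  bipartite_forest_matching_covers_chores_general G hbip hforest hdeg
end

section
/- Let w ∈ ℝ^n be a positive weight vector, x an integral optimal solution to the transportation LP minimizing Σ_i Σ_j w_i c_{ij} x_{ij} subject to Σ_i x_{ij} = 1 for all j and x ≥ 0, and p an optimal solution to the dual LP maximizing Σ_j p_j subject to p_j ≤ w_i c_{ij} for all i, j. If the allocation induced by x is pEF1 with respect to p, then it is EF1 with respect to the costs c_i. -/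
/-!
Fix the envious agent `i` and scale its costs by `w i`. Complementary slackness makes the prices
of `i`'s own chores equal to `w i * c i`, while dual feasibility bounds every other price by
`w i * c i`. Hence envy in costs is envy in prices, and the chore that pEF1 removes from `x i`
satisfies `w i * c i (x i \ {j}) = p (x i \ {j}) ≤ p (x i') ≤ w i * c i (x i')`.
-/

open Finset

section

variable {M : Type*} {p c : M → ℝ} {a : ℝ} {S T : Finset M}

lemma sum_eq_mul_sum_of_forall_eq (h : ∀ j ∈ S, p j = a * c j) :
    ∑ j ∈ S, p j = a * ∑ j ∈ S, c j := by
  rw [mul_sum]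
  exact sum_congr rfl h

lemma sum_le_mul_sum_of_forall_le (h : ∀ j ∈ T, p j ≤ a * c j) :
    ∑ j ∈ T, p j ≤ a * ∑ j ∈ T, c j := by
  rw [mul_sum]
  exact sum_le_sum h

lemma exists_sum_erase_le_of_price_ef1 [DecidableEq M] (ha : 0 < a)
    (hS : ∀ j ∈ S, p j = a * c j) (hT : ∀ j ∈ T, p j ≤ a * c j)
    (hp : ∑ j ∈ T, p j < ∑ j ∈ S, p j → ∃ j ∈ S, ∑ k ∈ S.erase j, p k ≤ ∑ k ∈ T, p k)
    (henvy : ∑ j ∈ T, c j < ∑ j ∈ S, c j) :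
    ∃ j ∈ S, ∑ k ∈ S.erase j, c k ≤ ∑ k ∈ T, c k := by
  have hpT := sum_le_mul_sum_of_forall_le hT
  obtain ⟨j, hj, hle⟩ := hp <| calc
    ∑ j ∈ T, p j ≤ a * ∑ j ∈ T, c j := hpT
    _ < a * ∑ j ∈ S, c j := mul_lt_mul_of_pos_left henvy ha
    _ = ∑ j ∈ S, p j := (sum_eq_mul_sum_of_forall_eq hS).symm
  refine ⟨j, hj, le_of_mul_le_mul_left ?_ ha⟩
  calc a * ∑ k ∈ S.erase j, c k
      = ∑ k ∈ S.erase j, p k :=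
        (sum_eq_mul_sum_of_forall_eq fun k hk => hS k (mem_of_mem_erase hk)).symm
    _ ≤ ∑ k ∈ T, p k := hle
    _ ≤ a * ∑ k ∈ T, c k := hpT

end

theorem pEF1_implies_EF1_general {N M : Type*} [DecidableEq M]
    (w : N → ℝ) (hw : ∀ i, 0 < w i)
    (c : N → M → ℝ)
    (p : M → ℝ)
    (x : N → Finset M)
    (hfeas : ∀ i j, p j ≤ w i * c i j)
    (hcs : ∀ i, ∀ j ∈ x i, p j = w i * c i j)
    (hpef1 : ∀ i i' : N, ∑ j ∈ x i, p j > ∑ j ∈ x i', p j →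
      ∃ j ∈ x i, ∑ k ∈ (x i).erase j, p k ≤ ∑ k ∈ x i', p k) :
    ∀ i i' : N, ∑ j ∈ x i, c i j > ∑ j ∈ x i', c i j →
      ∃ j ∈ x i, ∑ k ∈ (x i).erase j, c i k ≤ ∑ k ∈ x i', c i k :=
  fun i i' henvy =>
    exists_sum_erase_le_of_price_ef1 (hw i) (hcs i) (fun j _ => hfeas i j) (hpef1 i i') henvy

/-- If `x` is an integral optimal solution of the weighted transportation LP
and `p` an optimal dual solution (expressed via feasibility and complementary slackness),
then pEF1 of `x` w.r.t. `p` implies EF1 w.r.t. the costs. -/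
theorem pEF1_implies_EF1 {N M : Type*} [Fintype N] [Fintype M] [DecidableEq M]
    (w : N → ℝ) (hw : ∀ i, 0 < w i)
    (c : N → M → ℝ) (hc : ∀ i j, 0 < c i j)
    (p : M → ℝ)
    (x : N → Finset M) (hpart : ∀ j : M, ∃! i, j ∈ x i)
    (hfeas : ∀ i j, p j ≤ w i * c i j)
    (hcs : ∀ i, ∀ j ∈ x i, p j = w i * c i j)
    (hpef1 : ∀ i i' : N, ∑ j ∈ x i, p j > ∑ j ∈ x i', p j →
      ∃ j ∈ x i, ∑ k ∈ (x i).erase j, p k ≤ ∑ k ∈ x i', p k) :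
    ∀ i i' : N, ∑ j ∈ x i, c i j > ∑ j ∈ x i', c i j →
      ∃ j ∈ x i, ∑ k ∈ (x i).erase j, c i k ≤ ∑ k ∈ x i', c i k :=
  pEF1_implies_EF1_general w hw c p x hfeas hcs hpef1
end

section
/- Under the conditions of the shrunken-weight LP: for any w ∈ Δ^{n-1}, any 0 < τ < c_min/(2n·c_max), any optimal integral allocation x to the LP minimizing Σ_{i,j}(τ + (1-τn)w_i)c_{ij}x_{ij} over fractional allocations, and the optimal dual prices p, there exists an agent i with w_i > 0 who is price envy-free, i.e., p(x_i) ≤ p(x_{i'}) for all agents i'. -/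
/-!
Since `τ·n < 1/2`, every shrunken weight `τ + (1 - τn)wᵢ` is at least `τ`, so all prices are
nonnegative, and an agent with `wᵢ ≥ 1/n` has shrunken weight above `1/(2n)`. If every weight is
positive, the agent of cheapest bundle is the witness. Otherwise some agent `i₀` has weight `0`,
hence shrunken weight `τ`. Optimality of `x` forces each chore to an agent minimising the weighted
cost of that chore, and the choice of `τ` makes `i₀` strictly cheaper on every chore than a
heaviest agent, who therefore receives nothing and envies nobody.
-/

open Finset

section IntegralAllocation

variable {ι κ : Type*} [Fintype ι] [Fintype κ] [DecidableEq ι] [DecidableEq κ]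

def IsOptimalIntegralAllocation (f : ι → κ → ℝ) (x : ι → Finset κ) : Prop :=
  (∀ j, ∃! i, j ∈ x i) ∧ ∀ y : ι → κ → ℝ, (∀ i j, 0 ≤ y i j) → (∀ j, ∑ i, y i j = 1) →
    ∑ i, ∑ j ∈ x i, f i j ≤ ∑ i, ∑ j, y i j * f i j

/-- Moving chore `j` from its owner `i₁` to `i₂` is a fractional allocation, so it cannot
lower the cost. -/
theorem IsOptimalIntegralAllocation.le_of_mem {f : ι → κ → ℝ} {x : ι → Finset κ}
    (hx : IsOptimalIntegralAllocation f x) {i₁ : ι} {j : κ} (hj : j ∈ x i₁) (i₂ : ι) :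
    f i₁ j ≤ f i₂ j := by
  obtain ⟨hpart, hopt⟩ := hx
  let e : ι → ι → κ → ℝ := fun i₀ i j' => if i = i₀ ∧ j' = j then 1 else 0
  let y : ι → κ → ℝ := fun i j' => (if j' ∈ x i then 1 else 0) + e i₂ i j' - e i₁ i j'
  have hcost_e (i₀ : ι) : ∑ i, ∑ j', e i₀ i j' * f i j' = f i₀ j := by
    simp [e, ite_and]
  have hcost_x : ∑ i, ∑ j ∈ x i, f i j = ∑ i, ∑ j', (if j' ∈ x i then 1 else 0) * f i j' := by
    simp [ite_mul, sum_ite_mem]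
  have hcolumn (j' : κ) : ∑ i, (if j' ∈ x i then (1 : ℝ) else 0) = 1 := by
    obtain ⟨i', hi', huniq⟩ := hpart j'
    rw [sum_congr rfl fun i _ => if_congr ⟨huniq i, fun h => h ▸ hi'⟩ rfl rfl]
    simp
  have hy0 (i : ι) (j' : κ) : 0 ≤ y i j' := by
    by_cases hi : i = i₁ ∧ j' = j
    · obtain ⟨rfl, rfl⟩ := hi
      simp only [y, e, hj]
      split_ifs <;> norm_num
    · simp only [y, e, if_neg hi, sub_zero]
      positivity
  have hy1 (j' : κ) : ∑ i, y i j' = 1 := by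
    simp [y, e, sum_add_distrib, sum_sub_distrib, hcolumn, ite_and]
  have key := hopt y hy0 hy1
  simp only [y, add_mul, sub_mul, sum_add_distrib, sum_sub_distrib, hcost_e] at key
  linarith

end IntegralAllocation

section ShrunkenWeight

variable {N cmin cmax τ : ℝ}

theorem mul_lt_half_of_lt_div (hcmin : 0 < cmin) (hcc : cmin ≤ cmax) (hτ0 : 0 < τ)
    (hτ : τ < cmin / (2 * N * cmax)) : τ * N < 1 / 2 := by
  have hden : 0 < 2 * N * cmax := (div_pos_iff_of_pos_left hcmin).1 (hτ0.trans hτ)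
  have hcmax : 0 < cmax := hcmin.trans_le hcc
  have : τ * (2 * N) * cmax < 1 * cmax := by linarith [(lt_div_iff₀ hden).1 hτ]
  linarith [lt_of_mul_lt_mul_right this hcmax.le]

/-- Scaled by `N`, the left side is at most `τ N cmax < cmin / 2` and the right side at least
`cmin`. -/
theorem mul_lt_shrunkenWeight_mul {w c₀ c₁ : ℝ} (hcmin : 0 < cmin) (hcc : cmin ≤ cmax)
    (hτ0 : 0 < τ) (hτ : τ < cmin / (2 * N * cmax)) (hw : 1 ≤ N * w) (hc₀ : c₀ ≤ cmax)
    (hc₁ : cmin ≤ c₁) : τ * c₀ < (τ + (1 - τ * N) * w) * c₁ := by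
  have hτN := mul_lt_half_of_lt_div hcmin hcc hτ0 hτ
  have hden : 0 < 2 * N * cmax := (div_pos_iff_of_pos_left hcmin).1 (hτ0.trans hτ)
  have hN : 0 < N := by nlinarith [hcmin.trans_le hcc]
  have hweight : 1 ≤ N * (τ + (1 - τ * N) * w) := by nlinarith
  have hcheap : N * (τ * c₀) < cmin / 2 := by
    nlinarith [(lt_div_iff₀ hden).1 hτ,
      mul_le_mul_of_nonneg_left hc₀ (by positivity : 0 ≤ N * τ)]
  have hdear : cmin ≤ N * ((τ + (1 - τ * N) * w) * c₁) := by
    nlinarith [mul_le_mul hweight hc₁ hcmin.le (by linarith)]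
  by_contra! h
  nlinarith [mul_le_mul_of_nonneg_left h hN.le]

end ShrunkenWeight

theorem exists_positive_weight_pEF_agent_general {n m : ℕ} [NeZero n]
    (cmin cmax : ℝ) (hcmin : 0 < cmin)
    (c : Fin n → Fin m → ℝ) (hc : ∀ i j, cmin ≤ c i j ∧ c i j ≤ cmax)
    (w : Fin n → ℝ) (hw0 : ∀ i, 0 ≤ w i) (hw1 : ∑ i, w i = 1)
    (τ : ℝ) (hτ0 : 0 < τ) (hτ : τ < cmin / (2 * n * cmax))
    (x : Fin n → Finset (Fin m)) (hpart : ∀ j, ∃! i, j ∈ x i)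
    (hopt : ∀ y : Fin n → Fin m → ℝ, (∀ i j, 0 ≤ y i j) → (∀ j, ∑ i, y i j = 1) →
      ∑ i, ∑ j ∈ x i, (τ + (1 - τ * n) * w i) * c i j ≤
        ∑ i, ∑ j, y i j * ((τ + (1 - τ * n) * w i) * c i j))
    (p : Fin m → ℝ)
    (hp : ∀ j, p j = univ.inf' univ_nonempty (fun i => (τ + (1 - τ * n) * w i) * c i j)) :
    ∃ i, 0 < w i ∧ ∀ i', ∑ j ∈ x i, p j ≤ ∑ j ∈ x i', p j := by
  by_cases hpos : ∀ i, 0 < w i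
  · obtain ⟨i, -, hmin⟩ := exists_min_image univ (fun i => ∑ j ∈ x i, p j) univ_nonempty
    exact ⟨i, hpos i, fun i' => hmin i' (mem_univ i')⟩
  obtain ⟨i₀, hi₀⟩ : ∃ i₀, w i₀ = 0 := by
    push Not at hpos
    obtain ⟨i, hi⟩ := hpos
    exact ⟨i, le_antisymm hi (hw0 i)⟩
  have hn : (0 : ℝ) < n := by exact_mod_cast Nat.pos_of_neZero n
  obtain ⟨i₁, -, hi₁⟩ : ∃ i ∈ univ, 1 / (n : ℝ) ≤ w i :=
    exists_le_of_sum_le univ_nonempty (by simp [hw1, hn.ne'])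
  have hcc (j : Fin m) : cmin ≤ cmax := (hc i₀ j).1.trans (hc i₀ j).2
  have hempty : x i₁ = ∅ := eq_empty_of_forall_notMem fun j hj => by
    have hle := IsOptimalIntegralAllocation.le_of_mem ⟨hpart, hopt⟩ hj i₀
    have hlt := mul_lt_shrunkenWeight_mul hcmin (hcc j) hτ0 hτ
      (by rwa [div_le_iff₀' hn] at hi₁) (hc i₀ j).2 (hc i₁ j).1
    simp only [hi₀, mul_zero, add_zero] at hle
    exact hle.not_gt hlt
  have hp0 (j : Fin m) : 0 ≤ p j := by
    rw [hp j]
    refine le_inf' _ _ fun i _ => mul_nonneg ?_ (hcmin.le.trans (hc i j).1)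
    nlinarith [mul_lt_half_of_lt_div hcmin (hcc j) hτ0 hτ, hw0 i]
  refine ⟨i₁, hi₁.trans_lt' (by positivity), fun i' => ?_⟩
  rw [hempty, sum_empty]
  exact sum_nonneg fun j _ => hp0 j

/-- For any `w ∈ Δ^{n-1}`, `0 < τ < c_min/(2n·c_max)`, any optimal integral
allocation `x` of the shrunken-weight LP (optimal among all fractional allocations), and the
optimal dual prices `p_j = min_i (τ + (1-τn)w_i)c_{ij}`, there is an agent `i` with `w_i > 0`
who is price envy-free. -/
theorem exists_positive_weight_pEF_agent {n m : ℕ} [NeZero n] [NeZero m]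
    (cmin cmax : ℝ) (hcmin : 0 < cmin)
    (c : Fin n → Fin m → ℝ) (hc : ∀ i j, cmin ≤ c i j ∧ c i j ≤ cmax)
    (w : Fin n → ℝ) (hw0 : ∀ i, 0 ≤ w i) (hw1 : ∑ i, w i = 1)
    (τ : ℝ) (hτ0 : 0 < τ) (hτ : τ < cmin / (2 * n * cmax))
    (x : Fin n → Finset (Fin m)) (hpart : ∀ j, ∃! i, j ∈ x i)
    (hopt : ∀ y : Fin n → Fin m → ℝ, (∀ i j, 0 ≤ y i j) → (∀ j, ∑ i, y i j = 1) →
      ∑ i, ∑ j ∈ x i, (τ + (1 - τ * n) * w i) * c i j ≤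
        ∑ i, ∑ j, y i j * ((τ + (1 - τ * n) * w i) * c i j))
    (p : Fin m → ℝ)
    (hp : ∀ j, p j = univ.inf' univ_nonempty (fun i => (τ + (1 - τ * n) * w i) * c i j)) :
    ∃ i, 0 < w i ∧ ∀ i', ∑ j ∈ x i, p j ≤ ∑ j ∈ x i', p j :=
  exists_positive_weight_pEF_agent_general cmin cmax hcmin c hc w hw0 hw1 τ hτ0 hτ x hpart hopt p hp
end

section
/- Let G = (N, M; E) be the bipartite graph on agents and chores with (i,j) ∈ E iff p_j = (τ + (1-τn)w_i)c_{ij}, where p is the unique optimal dual price vector p_j = min_i (τ + (1-τn)w_i)c_{ij}. If the instance is non-degenerate (i.e., for every cycle C = (i_1,j_1,…,i_ℓ,j_ℓ,i_{ℓ+1}) in the complete bipartite graph on N and M, the product Π_{k=1}^ℓ c_{i_k j_k}/c_{i_{k+1} j_k} ≠ 1), then G is a forest. -/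
/-!
On an edge `(i, j)` of the MPB graph, `α i * c i j = p j` with `α i = τ + (1 - τn) w_i > 0`. Along a
cycle `i₁ j₁ i₂ … iₗ jₗ i₁` each ratio `c_{i_k j_k} / c_{i_{k+1} j_k}` is therefore
`α_{i_{k+1}} / α_{i_k}`, so the cycle product telescopes to `1`, which non-degeneracy forbids.
Since the graph is bipartite, a cycle alternates between agents and chores and can be read off as
such a sequence with distinct agents and distinct chores.
-/

open Finset Function Sum

section Telescoping

variable {ι κ K : Type*} [CommGroupWithZero K] {α : ι → K} {c : ι → κ → K} {p : κ → K}

theorem prod_div_eq_one_of_alternating {N : ℕ} [NeZero N] (hαc : ∀ i j, α i * c i j ≠ 0)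
    (ia : Fin N → ι) (ja : Fin N → κ)
    (h : ∀ k, p (ja k) = α (ia k) * c (ia k) (ja k) ∧
      p (ja k) = α (ia (k + 1)) * c (ia (k + 1)) (ja k)) :
    ∏ k, c (ia k) (ja k) / c (ia (k + 1)) (ja k) = 1 := by
  have hratio : ∀ k, c (ia k) (ja k) / c (ia (k + 1)) (ja k) = α (ia (k + 1)) / α (ia k) := by
    intro k
    rw [div_eq_div_iff (right_ne_zero_of_mul (hαc _ _)) (left_ne_zero_of_mul (hαc _ (ja k))),
      mul_comm, ← (h k).1, (h k).2]
  rw [prod_congr rfl fun k _ => hratio k, prod_div_distrib,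
    Fintype.prod_equiv (Equiv.addRight 1) (fun k => α (ia (k + 1))) (fun k => α (ia k))
      fun _ => rfl]
  exact div_self (prod_ne_zero_iff.mpr fun k _ => left_ne_zero_of_mul (hαc (ia k) (ja k)))

end Telescoping

namespace SimpleGraph

variable {ι κ : Type*}

section Bipartite

variable {G : SimpleGraph (ι ⊕ κ)}

theorem Walk.isLeft_getVert_eq_iff_even (hG : G ≤ completeBipartiteGraph ι κ) {u v : ι ⊕ κ}
    (w : G.Walk u v) {k : ℕ} (hk : k ≤ w.length) :
    (w.getVert k).isLeft = u.isLeft ↔ Even k := by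
  let side : G.Coloring Bool := Coloring.mk isLeft fun {x y} h => by
    have := hG h
    cases x <;> cases y <;> simp_all
  have := side.even_length_iff_congr (w.take k)
  rw [Walk.take_length, min_eq_left hk, Bool.coe_iff_coe] at this
  exact eq_comm.trans this.symm

theorem Walk.IsCycle.exists_alternating_of_inl (hG : G ≤ completeBipartiteGraph ι κ) {i₀ : ι}
    {w : G.Walk (inl i₀) (inl i₀)} (hw : w.IsCycle) :
    ∃ (ℓ : ℕ) (ia : Fin (ℓ + 2) → ι) (ja : Fin (ℓ + 2) → κ), Injective ia ∧ Injective ja ∧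
      ∀ k, G.Adj (inl (ia k)) (inr (ja k)) ∧ G.Adj (inl (ia (k + 1))) (inr (ja k)) := by
  have hlen := hw.three_le_length
  obtain ⟨r, hr⟩ : Even w.length := by
    simpa using w.isLeft_getVert_eq_iff_even hG le_rfl
  obtain ⟨ℓ, hℓ⟩ : ∃ ℓ, w.length = 2 * (ℓ + 2) := ⟨r - 2, by omega⟩
  have hL : ∀ k : Fin (ℓ + 2), ∃ i, w.getVert (2 * k) = inl i := fun k => isLeft_iff.mp <| by
    simpa using (w.isLeft_getVert_eq_iff_even hG (k := 2 * k) (by omega)).mpr (even_two_mul _)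
  have hR : ∀ k : Fin (ℓ + 2), ∃ j, w.getVert (2 * k + 1) = inr j := fun k => isRight_iff.mp <| by
    simpa [Nat.even_add_one] using w.isLeft_getVert_eq_iff_even hG (k := 2 * k + 1) (by omega)
  choose ia hia using hL
  choose ja hja using hR
  have hnext : ∀ k : Fin (ℓ + 2), w.getVert (2 * k + 2) = inl (ia (k + 1)) := by
    intro k
    rw [← hia, Fin.val_add_one]
    split_ifs with hk
    · rw [hk, Fin.val_last, Nat.mul_zero, Walk.getVert_zero,
        show 2 * (ℓ + 1) + 2 = w.length by omega, Walk.getVert_length]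
    · rfl
  have hpos : ∀ a b, a < w.length → b < w.length → w.getVert a = w.getVert b → a = b :=
    fun a b ha hb => hw.getVert_injOn' (show a ≤ w.length - 1 by omega) (show b ≤ _ by omega)
  refine ⟨ℓ, ia, ja, fun a b hab => ?_, fun a b hab => ?_, fun k => ⟨?_, ?_⟩⟩
  · have := hpos _ _ (by omega) (by omega) ((hia a).trans (hab ▸ (hia b).symm))
    omega
  · have := hpos _ _ (by omega) (by omega) ((hja a).trans (hab ▸ (hja b).symm))
    omega
  · simpa [hia, hja] using w.adj_getVert_succ (i := 2 * k) (by omega)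
  · simpa [hnext, hja] using (w.adj_getVert_succ (i := 2 * k + 1) (by omega)).symm

theorem Walk.IsCycle.exists_alternating (hG : G ≤ completeBipartiteGraph ι κ) {v : ι ⊕ κ}
    {w : G.Walk v v} (hw : w.IsCycle) :
    ∃ (ℓ : ℕ) (ia : Fin (ℓ + 2) → ι) (ja : Fin (ℓ + 2) → κ), Injective ia ∧ Injective ja ∧
      ∀ k, G.Adj (inl (ia k)) (inr (ja k)) ∧ G.Adj (inl (ia (k + 1))) (inr (ja k)) := by
  obtain ⟨i₀, hi₀⟩ : ∃ i₀, inl i₀ ∈ w.support := by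
    cases v with
    | inl i => exact ⟨i, w.start_mem_support⟩
    | inr j =>
      obtain ⟨i, hi⟩ := isLeft_iff.mp <| by
        simpa using w.isLeft_getVert_eq_iff_even hG (k := 1) (by have := hw.three_le_length; omega)
      exact ⟨i, hi ▸ w.getVert_mem_support 1⟩
  classical
  exact (hw.rotate hi₀).exists_alternating_of_inl hG

end Bipartite

variable {K : Type*} [CommGroupWithZero K]

/-- In the paper `α i = τ + (1 - τ n) w_i`, and `p` is the optimal price vector. -/
def mpbGraph (α : ι → K) (c : ι → κ → K) (p : κ → K) : SimpleGraph (ι ⊕ κ) :=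
  fromRel fun u v => ∃ i j, u = inl i ∧ v = inr j ∧ p j = α i * c i j

variable {α : ι → K} {c : ι → κ → K} {p : κ → K}

theorem mpbGraph_le_completeBipartiteGraph :
    mpbGraph α c p ≤ completeBipartiteGraph ι κ := by
  rintro _ _ ⟨-, ⟨i, j, rfl, rfl, -⟩ | ⟨i, j, rfl, rfl, -⟩⟩ <;> simp

@[simp]
theorem mpbGraph_adj_inl_inr {i : ι} {j : κ} :
    (mpbGraph α c p).Adj (inl i) (inr j) ↔ p j = α i * c i j := by
  simp [mpbGraph]

theorem mpbGraph_isAcyclic (hαc : ∀ i j, α i * c i j ≠ 0)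
    (hnondeg : ∀ ℓ : ℕ, ∀ (ia : Fin (ℓ + 2) → ι) (ja : Fin (ℓ + 2) → κ),
      Injective ia → Injective ja → ∏ k, c (ia k) (ja k) / c (ia (k + 1)) (ja k) ≠ 1) :
    (mpbGraph α c p).IsAcyclic := fun _ _ hw => by
  obtain ⟨ℓ, ia, ja, hia, hja, hadj⟩ := hw.exists_alternating mpbGraph_le_completeBipartiteGraph
  exact hnondeg ℓ ia ja hia hja <| prod_div_eq_one_of_alternating hαc ia ja fun k => by
    simpa using hadj k

end SimpleGraph

theorem mpb_graph_is_forest_general {n m : ℕ}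
    (cmin cmax : ℝ) (hcmin : 0 < cmin)
    (c : Fin n → Fin m → ℝ) (hc : ∀ i j, cmin ≤ c i j ∧ c i j ≤ cmax)
    (w : Fin n → ℝ) (hw0 : ∀ i, 0 ≤ w i)
    (τ : ℝ) (hτ0 : 0 < τ) (hτ : τ < cmin / (2 * n * cmax))
    (p : Fin m → ℝ)
    (hnondeg : ∀ ℓ : ℕ, ∀ (ia : Fin (ℓ + 2) → Fin n) (ja : Fin (ℓ + 2) → Fin m),
      Function.Injective ia → Function.Injective ja →
      (∏ k, c (ia k) (ja k) / c (ia (k + 1)) (ja k)) ≠ 1) :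
    (SimpleGraph.fromRel (fun u v : Fin n ⊕ Fin m => ∃ i j,
      u = Sum.inl i ∧ v = Sum.inr j ∧ p j = (τ + (1 - τ * n) * w i) * c i j)).IsAcyclic := by
  refine SimpleGraph.mpbGraph_isAcyclic (fun i j => ?_) hnondeg
  obtain ⟨hlo, hhi⟩ := hc i j
  have hτn : τ * n < 1 := by
    rcases n.eq_zero_or_pos with hn | hn
    · simp [hn]
    · have hden : 0 < 2 * n * cmax :=
        mul_pos (mul_pos two_pos (Nat.cast_pos.mpr hn)) (by linarith)
      rw [lt_div_iff₀ hden] at hτ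
      nlinarith
  have hweight : 0 < τ + (1 - τ * n) * w i :=
    add_pos_of_pos_of_nonneg hτ0 (mul_nonneg (by linarith) (hw0 i))
  exact (mul_pos hweight (hcmin.trans_le hlo)).ne'

/-- Let `G = (N, M; E)` be the bipartite graph with `(i,j) ∈ E` iff
`p_j = (τ + (1-τn)w_i)·c_{ij}`, where `p_j = min_i (τ + (1-τn)w_i)·c_{ij}` is the unique
optimal dual price vector. If the instance is non-degenerate (the cycle product
`∏_k c_{i_k j_k}/c_{i_{k+1} j_k} ≠ 1` for every cycle of the complete bipartite graph),
then `G` is a forest. -/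
theorem mpb_graph_is_forest {n m : ℕ} [NeZero n]
    (cmin cmax : ℝ) (hcmin : 0 < cmin)
    (c : Fin n → Fin m → ℝ) (hc : ∀ i j, cmin ≤ c i j ∧ c i j ≤ cmax)
    (w : Fin n → ℝ) (hw0 : ∀ i, 0 ≤ w i) (hw1 : ∑ i, w i = 1)
    (τ : ℝ) (hτ0 : 0 < τ) (hτ : τ < cmin / (2 * n * cmax))
    (p : Fin m → ℝ)
    (hp : ∀ j, p j = univ.inf' univ_nonempty (fun i => (τ + (1 - τ * n) * w i) * c i j))
    (hnondeg : ∀ ℓ : ℕ, ∀ (ia : Fin (ℓ + 2) → Fin n) (ja : Fin (ℓ + 2) → Fin m),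
      Function.Injective ia → Function.Injective ja →
      (∏ k, c (ia k) (ja k) / c (ia (k + 1)) (ja k)) ≠ 1) :
    (SimpleGraph.fromRel (fun u v : Fin n ⊕ Fin m => ∃ i j,
      u = Sum.inl i ∧ v = Sum.inr j ∧ p j = (τ + (1 - τ * n) * w i) * c i j)).IsAcyclic :=
  mpb_graph_is_forest_general cmin cmax hcmin c hc w hw0 τ hτ0 hτ p hnondeg
end

section
/- Suppose A·P^ε = B·Q^ε where A, B are positive reals with |A - B| ≥ δ' whenever A ≠ B, P and Q are products of distinct primes (so P ≠ Q as integers unless their prime multisets agree), Q ≤ (n·q)^1 for bounds n·q, B ≤ n·c_max, and 0 < ε < log_{nq}(1 + δ'/(2n·c_max)). Then A = B. -/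
/-!
Write `d = δ' / (2 n c_max)`. The choice of `ε` gives `1 ≤ P^ε, Q^ε < (nq)^ε < 1 + d`, so the
equation `A P^ε = B Q^ε` moves `A` and `B` apart by less than `B d ≤ δ'/2`, which the gap
`|A - B| ≥ δ'` between distinct values forbids.
-/

open Real

lemma Real.rpow_lt_of_le_of_lt_logb {b c x ε : ℝ} (hb : 1 < b) (hc : 0 < c) (hx : 0 ≤ x)
    (hxb : x ≤ b) (hε0 : 0 ≤ ε) (hε : ε < logb b c) : x ^ ε < c :=
  calc x ^ ε ≤ b ^ ε := rpow_le_rpow hx hxb hε0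
    _ < c := (lt_logb_iff_rpow_lt hb hc).1 hε

lemma abs_sub_lt_mul_of_mul_eq_mul {A B x y d : ℝ} (hA : 0 < A) (hB : 0 < B) (hx : 1 ≤ x)
    (hy : 1 ≤ y) (hxd : x < 1 + d) (hyd : y < 1 + d) (h : A * x = B * y) :
    |A - B| < B * d := by
  rcases le_or_gt B A with hBA | hAB
  · rw [abs_of_nonneg (sub_nonneg.2 hBA)]
    calc A - B ≤ A * x - B := sub_le_sub_right (le_mul_of_one_le_right hA.le hx) B
      _ = B * (y - 1) := by rw [h]; ring
      _ < B * d := mul_lt_mul_of_pos_left (by linarith) hB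
  · rw [abs_sub_comm, abs_of_pos (sub_pos.2 hAB)]
    calc B - A ≤ B * y - A := sub_le_sub_right (le_mul_of_one_le_right hB.le hy) A
      _ = A * (x - 1) := by rw [← h]; ring
      _ < A * d := mul_lt_mul_of_pos_left (by linarith) hA
      _ ≤ B * d := mul_le_mul_of_nonneg_right hAB.le (by linarith)

theorem perturbation_no_new_coincidence_general
    (A B P Q n q cmax δ' ε : ℝ)
    (hA : 0 < A) (hB : 0 < B)
    (hP1 : 1 ≤ P) (hQ1 : 1 ≤ Q)
    (hPle : P ≤ n * q) (hQle : Q ≤ n * q)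
    (hδ' : 0 < δ') (hnq : 1 < n * q)
    (hgap : A ≠ B → δ' ≤ |A - B|)
    (hBle : B ≤ n * cmax)
    (hε0 : 0 < ε) (hε : ε < Real.logb (n * q) (1 + δ' / (2 * n * cmax)))
    (heq : A * P ^ ε = B * Q ^ ε) :
    A = B := by
  by_contra hne
  have hncmax : 0 < n * cmax := hB.trans_le hBle
  set d := δ' / (2 * n * cmax)
  have hd : 0 < d := div_pos hδ' (by rw [mul_assoc]; exact mul_pos two_pos hncmax)
  have hpow_lt {R : ℝ} (hR1 : 1 ≤ R) (hR : R ≤ n * q) : R ^ ε < 1 + d :=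
    rpow_lt_of_le_of_lt_logb hnq (by linarith) (by linarith) hR hε0.le hε
  have hclose : |A - B| < B * d :=
    abs_sub_lt_mul_of_mul_eq_mul hA hB (one_le_rpow hP1 hε0.le) (one_le_rpow hQ1 hε0.le)
      (hpow_lt hP1 hPle) (hpow_lt hQ1 hQle) heq
  have hBd : B * d ≤ δ' / 2 :=
    calc B * d ≤ n * cmax * d := mul_le_mul_of_nonneg_right hBle hd.le
      _ = δ' / 2 := by
        rw [mul_div_assoc', mul_assoc 2, mul_comm 2]
        exact mul_div_mul_left δ' 2 hncmax.ne'
  linarith [hgap hne]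

/-- If `A·P^ε = B·Q^ε` where `A, B > 0` satisfy `|A - B| ≥ δ'` whenever
`A ≠ B`, `P, Q ≥ 1` are bounded by `n·q`, `B ≤ n·c_max`, and
`0 < ε < log_{nq}(1 + δ'/(2n·c_max))`, then `A = B`. -/
theorem perturbation_no_new_coincidence
    (A B P Q n q cmax δ' ε : ℝ)
    (hA : 0 < A) (hB : 0 < B)
    (hP1 : 1 ≤ P) (hQ1 : 1 ≤ Q)
    (hPle : P ≤ n * q) (hQle : Q ≤ n * q)
    (hδ' : 0 < δ') (hcmax : 0 < cmax) (hn : 1 ≤ n) (hnq : 1 < n * q)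
    (hgap : A ≠ B → δ' ≤ |A - B|)
    (hBle : B ≤ n * cmax)
    (hε0 : 0 < ε) (hε : ε < Real.logb (n * q) (1 + δ' / (2 * n * cmax)))
    (heq : A * P ^ ε = B * Q ^ ε) :
    A = B :=
  perturbation_no_new_coincidence_general A B P Q n q cmax δ' ε hA hB hP1 hQ1 hPle hQle hδ' hnq hgap
    hBle hε0 hε heq
end

section
/- Let c_i be an additive cost function on subsets of M = {1,…,m} with values c_{ij} ∈ (0, c_max], let δ > 0 satisfy |c_i(S) - c_i(T)| ≥ δ whenever c_i(S) ≠ c_i(T), and let perturbed costs be c^ε_{ij} = c_{ij}·q_{ij}^ε where each q_{ij} ≥ 1 and q_{ij} ≤ q for a bound q, with 0 < ε < log_q(1 + δ/(2m·c_max)). Then for any S, T ⊆ M with c_i(S) > c_i(T), the perturbed costs satisfy c^ε_i(S) > c^ε_i(T). -/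
/-!
Every multiplier `q_j^ε` lies in `[1, q^ε]`, and `q^ε < 1 + δ / (2 m c_max)` by the choice of `ε`.
So perturbing can only raise the cost of `S`, while it raises the cost of `T` by at most
`(q^ε - 1) · c(T) < δ / (2 m c_max) · m c_max = δ / 2`, which is less than the gap `δ ≤ c(S) - c(T)`.
-/

open Finset

theorem Finset.sum_mul_lt_sum_mul_of_add_le {ι : Type*} {S T : Finset ι} {c u : ι → ℝ}
    {b δ : ℝ} (hc : ∀ j, 0 ≤ c j) (hu : ∀ j, 1 ≤ u j ∧ u j ≤ b)
    (hgap : ∑ j ∈ T, c j + δ ≤ ∑ j ∈ S, c j) (hsmall : (b - 1) * ∑ j ∈ T, c j < δ) :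
    ∑ j ∈ T, c j * u j < ∑ j ∈ S, c j * u j :=
  calc ∑ j ∈ T, c j * u j
      ≤ ∑ j ∈ T, c j * b := sum_le_sum fun j _ => mul_le_mul_of_nonneg_left (hu j).2 (hc j)
    _ = ∑ j ∈ T, c j + (b - 1) * ∑ j ∈ T, c j := by rw [← sum_mul]; ring
    _ < ∑ j ∈ S, c j := by linarith
    _ ≤ ∑ j ∈ S, c j * u j := sum_le_sum fun j _ => le_mul_of_one_le_right (hc j) (hu j).1

theorem Finset.sum_le_mul_of_le {m : ℕ} (T : Finset (Fin m)) {c : Fin m → ℝ} {M : ℝ}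
    (hM : 0 ≤ M) (hc : ∀ j, c j ≤ M) : ∑ j ∈ T, c j ≤ m * M :=
  calc ∑ j ∈ T, c j
      ≤ #T • M := sum_le_card_nsmul T c M fun j _ => hc j
    _ ≤ m * M := by
      rw [nsmul_eq_mul]
      gcongr
      simpa using card_le_univ T

/-- Strict comparisons between bundle costs are preserved under a
sufficiently small prime-power perturbation `c^ε_j = c_j · q_j^ε`. -/
theorem perturbed_costs_preserve_strict {m : ℕ} (hm : 0 < m)
    (cmax δ q ε : ℝ) (hcmax : 0 < cmax) (hδ : 0 < δ) (hq : 1 < q)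
    (c : Fin m → ℝ) (hc : ∀ j, 0 < c j ∧ c j ≤ cmax)
    (hgap : ∀ S T : Finset (Fin m),
      (∑ j ∈ S, c j) ≠ (∑ j ∈ T, c j) → δ ≤ |(∑ j ∈ S, c j) - (∑ j ∈ T, c j)|)
    (qp : Fin m → ℝ) (hqp : ∀ j, 1 ≤ qp j ∧ qp j ≤ q)
    (hε0 : 0 < ε) (hε : ε < Real.logb q (1 + δ / (2 * m * cmax)))
    (S T : Finset (Fin m)) (hST : ∑ j ∈ T, c j < ∑ j ∈ S, c j) :
    ∑ j ∈ T, c j * qp j ^ ε < ∑ j ∈ S, c j * qp j ^ ε := by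
  have hqε : q ^ ε < 1 + δ / (2 * m * cmax) :=
    (Real.lt_logb_iff_rpow_lt hq (by positivity)).1 hε
  have hgapST : ∑ j ∈ T, c j + δ ≤ ∑ j ∈ S, c j := by
    have := hgap S T hST.ne'
    rw [abs_of_pos (sub_pos.2 hST)] at this
    linarith
  have hsmall : (q ^ ε - 1) * ∑ j ∈ T, c j < δ :=
    calc (q ^ ε - 1) * ∑ j ∈ T, c j
        ≤ δ / (2 * m * cmax) * (m * cmax) := by
          gcongr
          · exact sum_nonneg fun j _ => (hc j).1.le
          · linarith
          · exact T.sum_le_mul_of_le hcmax.le fun j => (hc j).2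
      _ = δ / 2 := by field_simp
      _ < δ := half_lt_self hδ
  refine sum_mul_lt_sum_mul_of_add_le (fun j => (hc j).1.le) (fun j => ⟨?_, ?_⟩) hgapST hsmall
  · exact Real.one_le_rpow (hqp j).1 hε0.le
  · exact Real.rpow_le_rpow (by linarith [(hqp j).1]) (hqp j).2 hε0.le
end

section
/- Let G = (N, M; E) be a bipartite graph, p_j > 0 prices, and for each agent i let r_i be the total price of degree-one chores adjacent to i in G; let r_max = max_i r_i and R = {i : r_i = r_max}. Let H be G with all degree-one chores removed, and suppose H is a forest with every remaining chore of degree ≥ 2. If an allocation x (assigning every chore j to an agent adjacent to j in G, degree-one chores to their unique neighbor) satisfies (I1): |x_i ∩ M_H| ≤ 1 for all i ∈ R, and (I2): p(x_i) ≥ r_max for all i ∈ N, and x is not pEF1, then the set V = {i : p̂(x_i) > r_max} of violators is nonempty and V ⊆ N \ R. -/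
open Finset

/-!
A pair witnessing the failure of pEF1 has `p̂(x_i) > p(x_{i'}) ≥ r_max` by (I2). For `i ∈ R`,
(I1) leaves at most one chore of `M_H` in `x_i`; dropping it leaves only degree-one chores
adjacent to `i`, whose total price is at most `r_i = r_max`.
-/

/-- Total price of a bundle after removing its most expensive chore
(`0` for the empty bundle). -/
noncomputable def priceHat {M : Type*} [DecidableEq M] (p : M → ℝ) (S : Finset M) : ℝ :=
  if h : S.Nonempty then S.inf' h (fun j => ∑ k ∈ S.erase j, p k) else 0

section priceHat

variable {M : Type*} [DecidableEq M] (p : M → ℝ)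

theorem priceHat_le_sum_erase {S : Finset M} {j : M} (hj : j ∈ S) :
    priceHat p S ≤ ∑ k ∈ S.erase j, p k := by
  rw [priceHat, dif_pos ⟨j, hj⟩]
  exact inf'_le _ hj

theorem lt_priceHat_of_lt_sum_erase {S : Finset M} {a : ℝ} (hS : a < ∑ k ∈ S, p k)
    (h : ∀ j ∈ S, a < ∑ k ∈ S.erase j, p k) : a < priceHat p S := by
  rcases S.eq_empty_or_nonempty with rfl | hne
  · simpa [priceHat] using hS
  · rw [priceHat, dif_pos hne, lt_inf'_iff]
    exact h

theorem priceHat_le_sum_sdiff_of_card_inter_le_one (hp : ∀ j, 0 ≤ p j) {S T : Finset M}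
    (hST : #(S ∩ T) ≤ 1) : priceHat p S ≤ ∑ k ∈ S \ T, p k := by
  rcases (S ∩ T).eq_empty_or_nonempty with hempty | ⟨j, hj⟩
  · rw [sdiff_eq_self_of_disjoint (disjoint_iff_inter_eq_empty.2 hempty)]
    rcases S.eq_empty_or_nonempty with rfl | ⟨j, hj⟩
    · simp [priceHat]
    · exact (priceHat_le_sum_erase p hj).trans
        (sum_le_sum_of_subset_of_nonneg (erase_subset j S) fun k _ _ => hp k)
  · have herase : S.erase j ⊆ S \ T := by
      intro k hk
      obtain ⟨hkj, hkS⟩ := mem_erase.1 hk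
      refine mem_sdiff.2 ⟨hkS, fun hkT => hkj ?_⟩
      exact card_le_one.1 hST k (mem_inter.2 ⟨hkS, hkT⟩) j hj
    exact (priceHat_le_sum_erase p (mem_inter.1 hj).1).trans
      (sum_le_sum_of_subset_of_nonneg herase fun k _ _ => hp k)

end priceHat

theorem sdiff_subset_filter_adj_deg_eq_one {N M : Type*} [Fintype N] [Fintype M]
    [DecidableEq M]
    (A : N → M → Prop) [∀ i j, Decidable (A i j)]
    (deg : M → ℕ) (hdeg : ∀ j, deg j = (univ.filter fun i => A i j).card)
    {i : N} {S : Finset M} (hS : ∀ j ∈ S, A i j) :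
    S \ univ.filter (fun j => 2 ≤ deg j) ⊆ univ.filter fun j => A i j ∧ deg j = 1 := by
  intro j hj
  obtain ⟨hjS, hjMH⟩ := mem_sdiff.1 hj
  have hpos : 0 < deg j := hdeg j ▸ card_pos.2 ⟨i, mem_filter.2 ⟨mem_univ i, hS j hjS⟩⟩
  have hnot_two_le : ¬ 2 ≤ deg j := fun h => hjMH (mem_filter.2 ⟨mem_univ j, h⟩)
  exact mem_filter.2 ⟨mem_univ j, hS j hjS, by omega⟩

theorem violators_nonempty_and_outside_R_general {N M : Type*} [Fintype N] [Fintype M]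
    [DecidableEq M]
    (A : N → M → Prop) [∀ i j, Decidable (A i j)]
    (p : M → ℝ) (hp : ∀ j, 0 < p j)
    (deg : M → ℕ) (hdeg : ∀ j, deg j = (univ.filter fun i => A i j).card)
    (r : N → ℝ) (hr : ∀ i, r i = ∑ j ∈ univ.filter (fun j => A i j ∧ deg j = 1), p j)
    (rmax : ℝ)
    (MH : Finset M) (hMH : MH = univ.filter fun j => 2 ≤ deg j)
    (x : N → Finset M)
    (hedge : ∀ i, ∀ j ∈ x i, A i j)
    (hI1 : ∀ i, r i = rmax → (x i ∩ MH).card ≤ 1)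
    (hI2 : ∀ i, rmax ≤ ∑ j ∈ x i, p j)
    (hnotpEF1 : ¬ ∀ i i' : N, ∑ j ∈ x i, p j > ∑ j ∈ x i', p j →
      ∃ j ∈ x i, ∑ k ∈ (x i).erase j, p k ≤ ∑ k ∈ x i', p k) :
    (∃ i, rmax < priceHat p (x i)) ∧ ∀ i, rmax < priceHat p (x i) → r i ≠ rmax := by
  push Not at hnotpEF1
  obtain ⟨i₀, i₁, hgt, hall⟩ := hnotpEF1
  refine ⟨⟨i₀, (hI2 i₁).trans_lt (lt_priceHat_of_lt_sum_erase p hgt hall)⟩,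
    fun i hi hri => ?_⟩
  have hle : priceHat p (x i) ≤ r i :=
    calc priceHat p (x i)
        ≤ ∑ j ∈ x i \ MH, p j :=
          priceHat_le_sum_sdiff_of_card_inter_le_one p (fun j => (hp j).le) (hI1 i hri)
      _ ≤ ∑ j ∈ univ.filter (fun j => A i j ∧ deg j = 1), p j :=
          sum_le_sum_of_subset_of_nonneg
            (hMH ▸ sdiff_subset_filter_adj_deg_eq_one A deg hdeg (hedge i))
            fun j _ _ => (hp j).le
      _ = r i := (hr i).symm
  linarith

/-- With `G = (N, M; E)` bipartite, `r_i` the total price of degree-one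
chores adjacent to `i`, `r_max = max_i r_i`, `R = {i : r_i = r_max}`, `M_H` the chores of
degree at least two (`H = G` minus degree-one chores being a forest): if an allocation `x`
along the edges of `G` satisfies (I1) `|x_i ∩ M_H| ≤ 1` for `i ∈ R` and
(I2) `p(x_i) ≥ r_max` for all `i`, and `x` is not pEF1, then the violator set
`V = {i : p̂(x_i) > r_max}` is nonempty and contained in `N \ R`. -/
theorem violators_nonempty_and_outside_R {N M : Type*} [Fintype N] [Fintype M]
    [DecidableEq N] [DecidableEq M] [Nonempty N]
    (A : N → M → Prop) [∀ i j, Decidable (A i j)]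
    (p : M → ℝ) (hp : ∀ j, 0 < p j)
    (deg : M → ℕ) (hdeg : ∀ j, deg j = (univ.filter fun i => A i j).card)
    (r : N → ℝ) (hr : ∀ i, r i = ∑ j ∈ univ.filter (fun j => A i j ∧ deg j = 1), p j)
    (rmax : ℝ) (hrmax : rmax = univ.sup' univ_nonempty r)
    (MH : Finset M) (hMH : MH = univ.filter fun j => 2 ≤ deg j)
    (hforest : (SimpleGraph.fromRel (fun u v : N ⊕ M => ∃ i j,
      u = Sum.inl i ∧ v = Sum.inr j ∧ j ∈ MH ∧ A i j)).IsAcyclic)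
    (x : N → Finset M) (hpart : ∀ j : M, ∃! i, j ∈ x i)
    (hedge : ∀ i, ∀ j ∈ x i, A i j)
    (hI1 : ∀ i, r i = rmax → (x i ∩ MH).card ≤ 1)
    (hI2 : ∀ i, rmax ≤ ∑ j ∈ x i, p j)
    (hnotpEF1 : ¬ ∀ i i' : N, ∑ j ∈ x i, p j > ∑ j ∈ x i', p j →
      ∃ j ∈ x i, ∑ k ∈ (x i).erase j, p k ≤ ∑ k ∈ x i', p k) :
    (∃ i, rmax < priceHat p (x i)) ∧ ∀ i, rmax < priceHat p (x i) → r i ≠ rmax :=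
  violators_nonempty_and_outside_R_general A p hp deg hdeg r hr rmax MH hMH x hedge hI1 hI2 hnotpEF1
end

section
/- Suppose x is an allocation supported on a bipartite forest H = (N, M_H; E_H) (each chore in M_H assigned to one of its neighbors), and let U, V ⊆ N be disjoint nonempty sets of agents such that every agent in N \ U holds at least one chore of M_H and every chore in M_H has degree ≥ 2 in H. Then there exists an alternating path (i_0, j_1, i_1, …, j_ℓ, i_ℓ) in H with i_0 ∈ U, i_ℓ ∈ V, and j_k ∈ x_{i_k} for all k ∈ [ℓ]. -/
/-!
Let `f` fix the agents of `U` and send every other agent `i` to a neighbour `f i ≠ i` of some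
chore `j` held by `i`; such a neighbour exists because `j` has degree at least two but only one
owner. Read backwards, the orbit `v, f v, f² v, …` of an agent `v ∈ V` is an alternating path.
A cycle `w, f w, …, fⁿ w = w` with `n ≥ 2` is impossible in a forest: going around it from the
chore `j` held by `w` back to `w` never uses the edge `(w, j)`, so that edge would not be a
bridge. Hence the orbit of `v` runs without repetition into a fixed point of `f`, that is, into `U`.
-/

open Finset Function SimpleGraph Sum

theorem Function.exists_least_isFixedPt_iterate {α : Type*} [Finite α] {f : α → α}
    (hf : periodicPts f ⊆ fixedPoints f) (x : α) :
    ∃ ℓ, IsFixedPt f (f^[ℓ] x) ∧ (∀ k < ℓ, ¬IsFixedPt f (f^[k] x)) ∧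
      Set.InjOn (f^[·] x) (Set.Iic ℓ) := by
  have isFixedPt_of_eq {a b : ℕ} (hab : a < b) (h : f^[a] x = f^[b] x) :
      IsFixedPt f (f^[a] x) := by
    refine hf (mk_mem_periodicPts (Nat.sub_pos_of_lt hab) ?_)
    rw [IsPeriodicPt, IsFixedPt, ← iterate_add_apply, Nat.sub_add_cancel hab.le, h]
  have hex : ∃ ℓ, IsFixedPt f (f^[ℓ] x) := by
    obtain ⟨a, b, hne, h⟩ := Finite.exists_ne_map_eq_of_infinite (f^[·] x)
    rcases hne.lt_or_gt with hab | hba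
    · exact ⟨a, isFixedPt_of_eq hab h⟩
    · exact ⟨b, isFixedPt_of_eq hba h.symm⟩
  classical
  refine ⟨Nat.find hex, Nat.find_spec hex, fun k hk => Nat.find_min hex hk, ?_⟩
  intro a ha b hb h
  by_contra hne
  rcases Ne.lt_or_gt hne with hab | hba
  · exact Nat.find_min hex (hab.trans_le hb) (isFixedPt_of_eq hab h)
  · exact Nat.find_min hex (hba.trans_le ha) (isFixedPt_of_eq hba h.symm)

theorem SimpleGraph.IsAcyclic.periodicPts_subset_fixedPoints {α β : Type*}
    {G : SimpleGraph (α ⊕ β)} (hG : G.IsAcyclic) {R : α → β → Prop}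
    (hR : ∀ ⦃a a' b⦄, R a b → R a' b → a = a') {f : α → α}
    (hf : ∀ a, f a ≠ a →
      ∃ b, R a b ∧ G.Adj (inl a) (inr b) ∧ G.Adj (inr b) (inl (f a))) :
    periodicPts f ⊆ fixedPoints f := by
  intro w hw
  by_contra hw_fix
  change f w ≠ w at hw_fix
  set n := minimalPeriod f w
  have hne : ∀ k, 0 < k → k < n → f^[k] w ≠ w := fun k hk hkn =>
    (iterate_eq_iterate_iff_of_lt_minimalPeriod (m := k) (n := 0) hkn
      (hk.trans hkn)).not.mpr hk.ne'
  have hmoves : ∀ k, f (f^[k] w) ≠ f^[k] w := fun k hfix => hw_fix <|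
    minimalPeriod_eq_one_iff_isFixedPt.mp <| by
      rw [← minimalPeriod_apply_iterate hw k]; exact minimalPeriod_eq_one_iff_isFixedPt.mpr hfix
  obtain ⟨b₀, hRb₀, hwb₀, hb₀fw⟩ := hf w hw_fix
  set G' := G.deleteEdges {s(inl w, inr b₀)}
  have hreach : ∀ k, 1 ≤ k → k ≤ n → G'.Reachable (inr b₀) (inl (f^[k] w)) := by
    intro k hk
    induction k, hk using Nat.le_induction with
    | base => exact fun _ => Adj.reachable (by simpa [G', hb₀fw] using hw_fix)
    | succ k hk ih =>
      intro hkn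
      obtain ⟨b, hRb, hub, hbfu⟩ := hf _ (hmoves k)
      have hkw := hne k hk hkn
      have h₁ : G'.Adj (inl (f^[k] w)) (inr b) := by simp [G', hub, hkw]
      have h₂ : G'.Adj (inr b) (inl (f^[k + 1] w)) := by
        have hbb₀ : b ≠ b₀ := fun h => hkw (hR hRb (h ▸ hRb₀))
        simp [G', iterate_succ_apply', hbfu, hbb₀]
      exact (ih (Nat.le_of_succ_le hkn)).trans (h₁.reachable.trans h₂.reachable)
  have hback := (hreach n (minimalPeriod_pos_of_mem_periodicPts hw) le_rfl).symm
  rw [iterate_minimalPeriod] at hback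
  exact isAcyclic_iff_forall_adj_isBridge.mp hG hwb₀ hback

theorem SimpleGraph.fromRel_adj_inl_inr {N M : Type*} {A : N → M → Prop} {i : N} {j : M}
    (h : A i j) :
    (fromRel fun u v : N ⊕ M => ∃ i j, u = inl i ∧ v = inr j ∧ A i j).Adj (inl i) (inr j) :=
  (fromRel_adj _ _ _).mpr ⟨inl_ne_inr, Or.inl ⟨i, j, rfl, rfl, h⟩⟩

section Allocation

variable {N M : Type*} [Fintype N] (A : N → M → Prop) [∀ i j, Decidable (A i j)]
  (x : N → Finset M)

theorem exists_adj_notMem_of_two_le_card {j : M} (hdeg : 2 ≤ #{i | A i j})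
    (hown : ∀ ⦃i i'⦄, j ∈ x i → j ∈ x i' → i = i') : ∃ i, A i j ∧ j ∉ x i := by
  by_contra! h
  have : #{i | A i j} ≤ 1 :=
    card_le_one.mpr fun i hi i' hi' => hown (h i (mem_filter.mp hi).2) (h i' (mem_filter.mp hi').2)
  omega

theorem exists_alternating_predecessor (hdeg : ∀ j, 2 ≤ #{i | A i j})
    (hown : ∀ ⦃i i' j⦄, j ∈ x i → j ∈ x i' → i = i') (U : Finset N)
    (hhold : ∀ i ∉ U, (x i).Nonempty) :
    ∃ f : N → N, (∀ i, f i = i ↔ i ∈ U) ∧ ∀ i ∉ U, ∃ j ∈ x i, A (f i) j := by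
  have h : ∀ i, ∃ i', (i' = i ↔ i ∈ U) ∧ (i ∉ U → ∃ j ∈ x i, A i' j) := by
    intro i
    by_cases hi : i ∈ U
    · exact ⟨i, by simp [hi], fun h => (h hi).elim⟩
    · obtain ⟨j, hj⟩ := hhold i hi
      obtain ⟨i', hA, hj'⟩ := exists_adj_notMem_of_two_le_card A x (hdeg j) (@hown · · j)
      refine ⟨i', ?_, fun _ => ⟨j, hj, hA⟩⟩
      simpa [hi] using fun (h : i' = i) => hj' (h ▸ hj)
  choose f hf using h
  exact ⟨f, fun i => (hf i).1, fun i => (hf i).2⟩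

end Allocation

theorem alternating_path_exists_general {N M : Type*} [Fintype N]
    (A : N → M → Prop) [∀ i j, Decidable (A i j)]
    (hdeg : ∀ j, 2 ≤ (univ.filter fun i => A i j).card)
    (hforest : (SimpleGraph.fromRel (fun u v : N ⊕ M => ∃ i j,
      u = Sum.inl i ∧ v = Sum.inr j ∧ A i j)).IsAcyclic)
    (x : N → Finset M) (hpart : ∀ j : M, ∃! i, j ∈ x i)
    (hedge : ∀ i, ∀ j ∈ x i, A i j)
    (U V : Finset N) (hV : V.Nonempty)
    (hhold : ∀ i ∉ U, (x i).Nonempty) :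
    ∃ (ℓ : ℕ) (ia : Fin (ℓ + 1) → N) (ja : Fin ℓ → M),
      Function.Injective ia ∧ Function.Injective ja ∧
      ia 0 ∈ U ∧ ia (Fin.last ℓ) ∈ V ∧
      ∀ k : Fin ℓ, A (ia k.castSucc) (ja k) ∧ ja k ∈ x (ia k.succ) := by
  have hown : ∀ ⦃i i' j⦄, j ∈ x i → j ∈ x i' → i = i' := fun _ _ j => (hpart j).unique
  obtain ⟨f, hfix, hstep⟩ := exists_alternating_predecessor A x hdeg hown U hhold
  have hper : periodicPts f ⊆ fixedPoints f :=
    hforest.periodicPts_subset_fixedPoints (R := fun i j => j ∈ x i) hown fun i hi =>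
      have ⟨j, hj, hA⟩ := hstep i (mt (hfix i).mpr hi)
      ⟨j, hj, fromRel_adj_inl_inr (hedge i j hj), (fromRel_adj_inl_inr hA).symm⟩
  obtain ⟨v, hv⟩ := hV
  obtain ⟨ℓ, hℓ, hbefore, hinj⟩ := exists_least_isFixedPt_iterate hper v
  have hchore (k : Fin ℓ) : ∃ j ∈ x (f^[k.rev] v), A (f^[k.rev + 1] v) j := by
    rw [iterate_succ_apply']
    exact hstep _ (mt (hfix _).mpr (hbefore _ k.rev.isLt))
  choose ja hja using hchore
  refine ⟨ℓ, fun k => f^[k.rev] v, ja, fun a b h => ?_, fun a b h => ?_,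
    by simpa using (hfix _).mp hℓ, by simpa using hv, fun k => ?_⟩
  · exact Fin.rev_injective <| Fin.ext <|
      hinj (Set.mem_Iic.mpr (Fin.is_le _)) (Set.mem_Iic.mpr (Fin.is_le _)) h
  · exact Fin.rev_injective <| Fin.ext <| hinj (Set.mem_Iic.mpr a.rev.isLt.le)
      (Set.mem_Iic.mpr b.rev.isLt.le) (hown (hja a).1 (h ▸ (hja b).1))
  · simp only [Fin.rev_castSucc, Fin.rev_succ, Fin.val_succ, Fin.val_castSucc]
    exact (hja k).symm

/-- In a bipartite forest `H = (N, M_H; E_H)` in which every chore has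
degree at least two, if an allocation `x` assigns each chore to one of its neighbors,
`U, V ⊆ N` are disjoint nonempty sets of agents, and every agent outside `U` holds at least
one chore, then there is an alternating path `(i_0, j_1, i_1, …, j_ℓ, i_ℓ)` with `i_0 ∈ U`,
`i_ℓ ∈ V`, edges `(i_{k-1}, j_k) ∈ E_H`, and `j_k ∈ x_{i_k}` for all `k`. -/
theorem alternating_path_exists {N M : Type*} [Fintype N] [Fintype M]
    [DecidableEq N] [DecidableEq M]
    (A : N → M → Prop) [∀ i j, Decidable (A i j)]
    (hdeg : ∀ j, 2 ≤ (univ.filter fun i => A i j).card)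
    (hforest : (SimpleGraph.fromRel (fun u v : N ⊕ M => ∃ i j,
      u = Sum.inl i ∧ v = Sum.inr j ∧ A i j)).IsAcyclic)
    (x : N → Finset M) (hpart : ∀ j : M, ∃! i, j ∈ x i)
    (hedge : ∀ i, ∀ j ∈ x i, A i j)
    (U V : Finset N) (hUV : Disjoint U V) (hU : U.Nonempty) (hV : V.Nonempty)
    (hhold : ∀ i ∉ U, (x i).Nonempty) :
    ∃ (ℓ : ℕ) (ia : Fin (ℓ + 1) → N) (ja : Fin ℓ → M),
      Function.Injective ia ∧ Function.Injective ja ∧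
      ia 0 ∈ U ∧ ia (Fin.last ℓ) ∈ V ∧
      ∀ k : Fin ℓ, A (ia k.castSucc) (ja k) ∧ ja k ∈ x (ia k.succ) :=
  alternating_path_exists_general A hdeg hforest x hpart hedge U V hV hhold
end
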